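/- Let d ≥ 1 and n ≥ 1, and let p : ℝⁿ → ℝ be a multilinear polynomial of degree at most d, i.e. p(x) = Σ_{T ⊆ [n], |T| ≤ d} c_T ∏_{i∈T} x_i for some real coefficients c_T, such that |p(x)| ≤ 1 for every x ∈ {-1,1}ⁿ. Then there exists a d-multilinear form p̃ : (ℝ^{n+1})^d → ℝ (linear in each of its d vector arguments) such that (i) p̃(x̃, x̃, …, x̃) = p(x) for every x ∈ ℝⁿ, where x̃ := (1, x₁, …, xₙ) ∈ ℝ^{n+1}, and (ii) |p̃(z⁽¹⁾, …, z⁽ᵈ⁾)| ≤ B(d) := (1/d!)·Σ_{s=1}^{d} (d choose s)·s^d for all z⁽¹⁾, …, z⁽ᵈ⁾ ∈ {-1,1}^{n+1}. -/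

import Mathlib

/-!
Write `p` as a sum of monomials and realize `∏ i ∈ T, x i` as `∏ k, z k (a k)`, where the tuple
`a` lists `T` (shifted by one) padded with the homogenizing coordinate `0`. Symmetrizing gives a
symmetric `d`-linear form `p̃` whose diagonal is the homogenization of `p`:
`p̃(y, …, y) = y₀ ^ d * p(y₁ / y₀, …, yₙ / y₀)`.

To bound `p̃` on sign vectors we may assume `z⁽ʲ⁾₀ = 1`, since flipping the sign of an argument
only flips the sign of the value. Polarization writes `d! p̃(z⁽¹⁾, …, z⁽ᵈ⁾)` as
`∑ S, ± p̃(w_S, …, w_S)` with `w_S = ∑ j ∈ S, z⁽ʲ⁾`, whose coordinate `0` is `|S|` and whose other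
coordinates are at most `|S|` in absolute value. Hence each term is `|S| ^ d * p(u)` with
`u ∈ [-1, 1]ⁿ`, and `|p(u)| ≤ 1` because a multilinear polynomial on the cube is an average of its
values at the vertices. Finally `∑ S, |S| ^ d = d! B(d)`.
-/

open scoped BigOperators

/-- `B(d) = (1/d!) · Σ_{s=1}^d (d choose s) · s^d`. -/
noncomputable def Bconst (d : ℕ) : ℝ :=
  (1 / (Nat.factorial d : ℝ)) * ∑ s ∈ Finset.Icc 1 d, (d.choose s : ℝ) * (s : ℝ) ^ d

open Finset Function Equiv

section Polarization

variable {R V M ι : Type*} [CommRing R] [AddCommGroup V] [Module R V] [AddCommGroup M]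
  [Module R M] [Fintype ι] [DecidableEq ι]

theorem Finset.sum_filter_superset_neg_one_pow_card_compl (A : Finset ι) :
    ∑ S with A ⊆ S, (-1 : R) ^ #Sᶜ = if A = univ then 1 else 0 := by
  have hcompl : ∑ S with A ⊆ S, (-1 : R) ^ #Sᶜ = ∑ T ∈ Aᶜ.powerset, (-1 : R) ^ #T :=
    sum_nbij' compl compl (by simp) (by simp [subset_compl_comm]) (by simp) (by simp)
      (by simp)
  have := congrArg (Int.cast : ℤ → R) (sum_powerset_neg_one_pow_card (x := Aᶜ))
  push_cast at this
  simpa [hcompl] using this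

theorem MultilinearMap.polarization (f : MultilinearMap R (fun _ : ι => V) M) (z : ι → V) :
    ∑ S : Finset ι, (-1 : R) ^ #Sᶜ • f (fun _ => ∑ j ∈ S, z j) =
      ∑ σ : Perm ι, f (fun i => z (σ i)) := by
  have hexpand (S : Finset ι) : f (fun _ => ∑ j ∈ S, z j) =
      ∑ r : ι → ι, if univ.image r ⊆ S then f (fun i => z (r i)) else 0 := by
    rw [f.map_sum_finset (fun _ j => z j) (fun _ => S), ← sum_filter]
    congr 1
    ext r
    simp [Fintype.mem_piFinset, image_subset_iff]
  calc ∑ S : Finset ι, (-1 : R) ^ #Sᶜ • f (fun _ => ∑ j ∈ S, z j)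
      = ∑ r : ι → ι, (∑ S with univ.image r ⊆ S, (-1 : R) ^ #Sᶜ) • f (fun i => z (r i)) := by
        simp_rw [hexpand, smul_sum, sum_smul, sum_filter]
        rw [sum_comm]
        congr! 2 with r - S
        split_ifs <;> simp
    _ = ∑ r : ι → ι with Surjective r, f (fun i => z (r i)) := by
        simp_rw [sum_filter_superset_neg_one_pow_card_compl, ite_smul, one_smul, zero_smul,
          ← sum_filter]
        refine sum_congr (filter_congr fun r _ => ?_) fun _ _ => rfl
        simp [eq_univ_iff_forall, Surjective]
    _ = ∑ σ : Perm ι, f (fun i => z (σ i)) := by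
        symm
        refine sum_nbij' (fun σ => ⇑σ)
          (fun r => if h : Surjective r then ofBijective r h.bijective_of_finite else 1)
          (by simp [Equiv.surjective]) (by simp) (fun σ _ => by simp [σ.surjective])
          (fun r hr => ?_) (by simp)
        simp_all

end Polarization

section Symmetrization

variable {𝕜 V M ι : Type*} [Field 𝕜] [AddCommGroup V] [Module 𝕜 V] [AddCommGroup M]
  [Module 𝕜 M] [Fintype ι] [DecidableEq ι]

namespace MultilinearMap

noncomputable def symmetrization (f : MultilinearMap 𝕜 (fun _ : ι => V) M) :
    MultilinearMap 𝕜 (fun _ : ι => V) M :=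
  ((Fintype.card ι).factorial : 𝕜)⁻¹ • ∑ σ : Perm ι, f.domDomCongr σ

variable (f : MultilinearMap 𝕜 (fun _ : ι => V) M)

theorem symmetrization_apply (z : ι → V) :
    f.symmetrization z =
      ((Fintype.card ι).factorial : 𝕜)⁻¹ • ∑ σ : Perm ι, f (fun i => z (σ i)) := by
  simp [symmetrization]

theorem symmetrization_apply_const [CharZero 𝕜] (v : V) :
    f.symmetrization (fun _ => v) = f (fun _ => v) := by
  rw [symmetrization_apply, sum_const, card_univ, Fintype.card_perm, ← Nat.cast_smul_eq_nsmul 𝕜,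
    smul_smul, inv_mul_cancel₀ (Nat.cast_ne_zero.mpr (Nat.factorial_ne_zero _)), one_smul]

theorem symmetrization_apply_eq_polarization (z : ι → V) :
    f.symmetrization z = ((Fintype.card ι).factorial : 𝕜)⁻¹ •
      ∑ S : Finset ι, (-1 : 𝕜) ^ #Sᶜ • f (fun _ => ∑ j ∈ S, z j) := by
  rw [symmetrization_apply, polarization]

end MultilinearMap

end Symmetrization

section Cube

variable {ι : Type*} [Fintype ι] [DecidableEq ι]

variable (ι) in
noncomputable def signVectors : Finset (ι → ℝ) :=
  Fintype.piFinset fun _ => {1, -1}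

theorem mem_signVectors {ε : ι → ℝ} : ε ∈ signVectors ι ↔ ∀ i, ε i = 1 ∨ ε i = -1 := by
  simp [signVectors]

/-- The law of independent signs `ε i` with means `u i`. -/
noncomputable def cubeWeight (u ε : ι → ℝ) : ℝ :=
  ∏ i, (1 + ε i * u i) / 2

theorem cubeWeight_nonneg {u ε : ι → ℝ} (hu : ∀ i, |u i| ≤ 1) (hε : ε ∈ signVectors ι) :
    0 ≤ cubeWeight u ε := by
  refine prod_nonneg fun i _ => ?_
  rcases mem_signVectors.mp hε i with h | h <;>
    simp only [h] <;> linarith [abs_le.mp (hu i)]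

theorem sum_cubeWeight_mul_prod (u : ι → ℝ) (T : Finset ι) :
    ∑ ε ∈ signVectors ι, cubeWeight u ε * ∏ i ∈ T, ε i = ∏ i ∈ T, u i := by
  have hfactor (ε : ι → ℝ) : cubeWeight u ε * ∏ i ∈ T, ε i =
      ∏ i, (1 + ε i * u i) / 2 * if i ∈ T then ε i else 1 := by
    rw [prod_mul_distrib, prod_ite_mem, univ_inter, cubeWeight]
  have hcoord (i : ι) : ∑ t ∈ ({1, -1} : Finset ℝ), (1 + t * u i) / 2 * (if i ∈ T then t else 1) =
      if i ∈ T then u i else 1 := by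
    rw [sum_pair (by norm_num)]
    split_ifs <;> ring
  simp_rw [hfactor]
  rw [signVectors, ← prod_univ_sum (fun _ => ({1, -1} : Finset ℝ))
    (fun i t => (1 + t * u i) / 2 * if i ∈ T then t else 1)]
  simp_rw [hcoord, prod_ite_mem, univ_inter]

theorem abs_le_of_abs_le_on_signVectors {𝒯 : Finset (Finset ι)} {c : Finset ι → ℝ}
    {f : (ι → ℝ) → ℝ} {C : ℝ} (hf : ∀ x, f x = ∑ T ∈ 𝒯, c T * ∏ i ∈ T, x i)
    (hC : ∀ ε : ι → ℝ, (∀ i, ε i = 1 ∨ ε i = -1) → |f ε| ≤ C) {u : ι → ℝ}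
    (hu : ∀ i, |u i| ≤ 1) : |f u| ≤ C := by
  have haverage : f u = ∑ ε ∈ signVectors ι, cubeWeight u ε * f ε := by
    simp_rw [hf, mul_sum, ← sum_cubeWeight_mul_prod u, mul_sum]
    rw [sum_comm]
    exact sum_congr rfl fun _ _ => sum_congr rfl fun _ _ => by ring
  have htotal : ∑ ε ∈ signVectors ι, cubeWeight u ε = 1 := by
    simpa using sum_cubeWeight_mul_prod u ∅
  calc |f u| ≤ ∑ ε ∈ signVectors ι, cubeWeight u ε * |f ε| := by
        rw [haverage]
        refine (abs_sum_le_sum_abs _ _).trans_eq (sum_congr rfl fun ε hε => ?_)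
        rw [abs_mul, abs_of_nonneg (cubeWeight_nonneg hu hε)]
    _ ≤ ∑ ε ∈ signVectors ι, cubeWeight u ε * C :=
        sum_le_sum fun ε hε =>
          mul_le_mul_of_nonneg_left (hC ε (mem_signVectors.mp hε)) (cubeWeight_nonneg hu hε)
    _ = C := by rw [← sum_mul, htotal, one_mul]

end Cube

section Construction

theorem Finset.exists_fin_tuple_prod_eq {α M : Type*} [CommMonoid M] [DecidableEq α] (a₀ : α) :
    ∀ {d : ℕ} {T : Finset α}, #T ≤ d →
      ∃ a : Fin d → α, ∀ g : α → M, ∏ k, g (a k) = g a₀ ^ (d - #T) * ∏ i ∈ T, g i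
  | 0, T, hT => ⟨Fin.elim0, fun g => by simp [card_eq_zero.mp (Nat.le_zero.mp hT)]⟩
  | d + 1, T, hT => by
    by_cases hTd : #T ≤ d
    · obtain ⟨a, ha⟩ := exists_fin_tuple_prod_eq (M := M) a₀ hTd
      refine ⟨Fin.cons a₀ a, fun g => ?_⟩
      rw [Fin.prod_univ_succ, Fin.cons_zero]
      simp only [Fin.cons_succ, ha, Nat.sub_add_comm hTd, pow_succ', mul_assoc]
    · obtain ⟨i, hi⟩ : T.Nonempty := card_pos.mp (by omega)
      obtain ⟨a, ha⟩ := exists_fin_tuple_prod_eq (M := M) a₀ (d := d) (T := T.erase i)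
        (by rw [card_erase_of_mem hi]; omega)
      refine ⟨Fin.cons i a, fun g => ?_⟩
      rw [Fin.prod_univ_succ, Fin.cons_zero]
      simp only [Fin.cons_succ, ha, card_erase_of_mem hi, show d - (#T - 1) = 0 by omega,
        show d + 1 - #T = 0 by omega, pow_zero, one_mul, mul_prod_erase T g hi]

variable {d n : ℕ}

theorem exists_multilinearMap_apply_const_cons_one_eq_prod {T : Finset (Fin n)} (hT : #T ≤ d) :
    ∃ q : MultilinearMap ℝ (fun _ : Fin d => Fin (n + 1) → ℝ) ℝ,
      ∀ x, q (fun _ => Fin.cons 1 x) = ∏ i ∈ T, x i := by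
  obtain ⟨a, ha⟩ := (T.map (Fin.succEmb n)).exists_fin_tuple_prod_eq (M := ℝ) 0 (by simpa)
  refine ⟨(MultilinearMap.mkPiAlgebra ℝ (Fin d) ℝ).compLinearMap fun k => LinearMap.proj (a k),
    fun x => ?_⟩
  simp [ha]

theorem exists_multilinearMap_apply_const_cons_one_eq (𝒯 : Finset (Finset (Fin n)))
    (h𝒯 : ∀ T ∈ 𝒯, #T ≤ d) (c : Finset (Fin n) → ℝ) :
    ∃ q : MultilinearMap ℝ (fun _ : Fin d => Fin (n + 1) → ℝ) ℝ,
      ∀ x, q (fun _ => Fin.cons 1 x) = ∑ T ∈ 𝒯, c T * ∏ i ∈ T, x i := by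
  choose! q hq using fun T hT => exists_multilinearMap_apply_const_cons_one_eq_prod (h𝒯 T hT)
  refine ⟨∑ T ∈ 𝒯, c T • q T, fun x => ?_⟩
  simp only [FunLike.coe_sum, Finset.sum_apply, smul_apply, smul_eq_mul]
  exact sum_congr rfl fun T hT => by rw [hq T hT]

end Construction

theorem MultilinearMap.abs_map_smul_univ_of_abs_eq_one {ι V : Type*} [Fintype ι]
    [AddCommGroup V] [Module ℝ V] (f : MultilinearMap ℝ (fun _ : ι => V) ℝ) {s : ι → ℝ}
    (hs : ∀ i, |s i| = 1) (z : ι → V) : |f (fun i => s i • z i)| = |f z| := by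
  rw [f.map_smul_univ, smul_eq_mul, abs_mul, abs_prod, prod_eq_one fun i _ => hs i, one_mul]

theorem Bconst_eq_sum_card_pow {d : ℕ} (hd : 1 ≤ d) :
    Bconst d = (d.factorial : ℝ)⁻¹ * ∑ S : Finset (Fin d), (#S : ℝ) ^ d := by
  rw [Bconst, one_div, ← powerset_univ, sum_powerset_apply_card (fun s => (s : ℝ) ^ d),
    card_univ, Fintype.card_fin, range_eq_Ico, sum_eq_sum_Ico_succ_bot (by omega),
    Nat.cast_zero, zero_pow (by omega), smul_zero, zero_add, zero_add,
    Ico_add_one_right_eq_Icc]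
  simp only [nsmul_eq_mul]

section Bound

variable {d n : ℕ} {q : MultilinearMap ℝ (fun _ : Fin d => Fin (n + 1) → ℝ) ℝ}

theorem MultilinearMap.abs_apply_const_le_pow (hd : 1 ≤ d)
    (hq : ∀ x : Fin n → ℝ, (∀ i, |x i| ≤ 1) → |q (fun _ => Fin.cons 1 x)| ≤ 1)
    {w : Fin (n + 1) → ℝ} (hw₀ : 0 ≤ w 0) (hw : ∀ i : Fin n, |w i.succ| ≤ w 0) :
    |q (fun _ => w)| ≤ w 0 ^ d := by
  rcases hw₀.eq_or_lt with hzero | hpos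
  · have : Nonempty (Fin d) := ⟨⟨0, hd⟩⟩
    have hw_zero : w = 0 := funext fun i => Fin.cases hzero.symm
      (fun i => abs_nonpos_iff.mp (hzero ▸ hw i)) i
    rw [hw_zero, show (fun _ : Fin d => (0 : Fin (n + 1) → ℝ)) = 0 from rfl, q.map_zero]
    simp
  have hscale : w = w 0 • Fin.cons 1 fun i => w i.succ / w 0 := by
    ext i
    refine Fin.cases ?_ (fun i => ?_) i <;> simp [mul_div_cancel₀ _ hpos.ne']
  have hunit : ∀ i : Fin n, |w i.succ / w 0| ≤ 1 := fun i => by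
    rw [abs_div, abs_of_pos hpos, div_le_one hpos]
    exact hw i
  calc |q (fun _ => w)| = w 0 ^ d * |q (fun _ => Fin.cons 1 fun i => w i.succ / w 0)| := by
        conv_lhs => rw [hscale]
        rw [q.map_smul_univ (fun _ => w 0), prod_const, card_univ, Fintype.card_fin,
          smul_eq_mul, abs_mul, abs_pow, abs_of_pos hpos]
    _ ≤ w 0 ^ d := mul_le_of_le_one_right (by positivity) (hq _ hunit)

theorem MultilinearMap.abs_symmetrization_le_Bconst (hd : 1 ≤ d)
    (hq : ∀ x : Fin n → ℝ, (∀ i, |x i| ≤ 1) → |q (fun _ => Fin.cons 1 x)| ≤ 1)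
    {z : Fin d → Fin (n + 1) → ℝ} (hz : ∀ j i, z j i = 1 ∨ z j i = -1) :
    |q.symmetrization z| ≤ Bconst d := by
  have hsign (j : Fin d) (i : Fin (n + 1)) : |z j i| = 1 := by rcases hz j i with h | h <;> simp [h]
  set z' : Fin d → Fin (n + 1) → ℝ := fun j => z j 0 • z j with hz'
  have hz'0 (j : Fin d) : z' j 0 = 1 := by rcases hz j 0 with h | h <;> simp [hz', h]
  have hnormalize : |q.symmetrization z| = |q.symmetrization z'| :=
    (q.symmetrization.abs_map_smul_univ_of_abs_eq_one (fun j => hsign j 0) z).symm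
  have hterm (S : Finset (Fin d)) : |q (fun _ => ∑ j ∈ S, z' j)| ≤ (#S : ℝ) ^ d := by
    have hw₀ : (∑ j ∈ S, z' j) 0 = #S := by simp [Finset.sum_apply, hz'0]
    have hw (i : Fin n) : |(∑ j ∈ S, z' j) i.succ| ≤ #S := by
      rw [Finset.sum_apply]
      calc |∑ j ∈ S, z' j i.succ| ≤ ∑ j ∈ S, |z' j i.succ| := abs_sum_le_sum_abs _ _
        _ = #S := by simp [hz', abs_mul, hsign]
    have := q.abs_apply_const_le_pow hd hq (w := ∑ j ∈ S, z' j) (by rw [hw₀]; positivity)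
      (by rwa [hw₀])
    rwa [hw₀] at this
  rw [hnormalize, q.symmetrization_apply_eq_polarization, Bconst_eq_sum_card_pow hd,
    Fintype.card_fin, smul_eq_mul, abs_mul, abs_inv, Nat.abs_cast]
  refine mul_le_mul_of_nonneg_left ((abs_sum_le_sum_abs _ _).trans (sum_le_sum fun S _ => ?_))
    (by positivity)
  simpa [abs_smul] using hterm S

end Bound

theorem degree_d_to_block_multilinear (d n : ℕ) (hd : 1 ≤ d)
    (c : Finset (Fin n) → ℝ) (p : (Fin n → ℝ) → ℝ)
    (hp : ∀ x : Fin n → ℝ,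
      p x = ∑ T ∈ Finset.univ.filter (fun T : Finset (Fin n) => T.card ≤ d),
        c T * ∏ i ∈ T, x i)
    (hbound : ∀ x : Fin n → ℝ, (∀ i, x i = 1 ∨ x i = -1) → |p x| ≤ 1) :
    ∃ pt : MultilinearMap ℝ (fun _ : Fin d => (Fin (n + 1) → ℝ)) ℝ,
      (∀ x : Fin n → ℝ, pt (fun _ => Fin.cons 1 x) = p x) ∧
      (∀ z : Fin d → (Fin (n + 1) → ℝ),
        (∀ j i, z j i = 1 ∨ z j i = -1) → |pt z| ≤ Bconst d) := by
  obtain ⟨q, hq⟩ := exists_multilinearMap_apply_const_cons_one_eq (d := d) _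
    (fun T hT => (mem_filter.mp hT).2) c
  have hqp (x : Fin n → ℝ) : q (fun _ => Fin.cons 1 x) = p x := (hq x).trans (hp x).symm
  have hq_le (x : Fin n → ℝ) (hx : ∀ i, |x i| ≤ 1) : |q (fun _ => Fin.cons 1 x)| ≤ 1 :=
    hqp x ▸ abs_le_of_abs_le_on_signVectors hp hbound hx
  exact ⟨q.symmetrization, fun x => by rw [q.symmetrization_apply_const, hqp],
    fun z hz => q.abs_symmetrization_le_Bconst hd hq_le hz⟩
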